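/- Let T× be a finite forest poset. The pointwise intersection of two ornamentations of T× is an ornamentation: if ρ and ρ′ are ornamentations, then v ↦ ρ(v) ∩ ρ′(v) is an ornamentation. -/

import Mathlib

/-- The Hasse diagram of a partial order, as a simple graph: `a` and `b` are adjacent
when one covers the other. For a rooted tree poset this is the underlying tree. -/
def hasseGraph (V : Type*) [PartialOrder V] : SimpleGraph V where
  Adj a b := a ⋖ b ∨ b ⋖ a
  symm := ⟨fun a b h => h.symm⟩
  loopless := by
    constructor
    intro a h
    rcases h with h | h <;> exact absurd h.lt (lt_irrefl a)

/-- `S` is an ornament of the forest poset `V` hung at `v`: a subset inducing a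
connected subgraph of the forest (= Hasse diagram) whose unique minimal element is
`v` (equivalently, whose least element is `v`). -/
def IsOrnamentHungAt {V : Type*} [PartialOrder V] (v : V) (S : Set V) : Prop :=
  v ∈ S ∧ (∀ x ∈ S, v ≤ x) ∧ ((hasseGraph V).induce S).Connected

/-- An ornamentation of the forest poset `V`: a function assigning to each `v` an
ornament hung at `v`, such that any two assigned ornaments are nested or disjoint. -/
def IsOrnamentation {V : Type*} [PartialOrder V] (ρ : V → Set V) : Prop :=
  (∀ v : V, IsOrnamentHungAt v (ρ v)) ∧
    ∀ v w : V, ρ v ⊆ ρ w ∨ ρ w ⊆ ρ v ∨ Disjoint (ρ v) (ρ w)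

/-!
In a forest the elements below any `x` form a chain, so every `w < x` is at most the unique
lower cover of `x`. Following a walk in the Hasse diagram from `x` down to `v` step by step,
this shows that an ornament hung at `v` contains the whole interval `[v, x]` for each of its
elements `x`. The intersection of two ornaments hung at `v` is then again interval-closed, so
every element descends to `v` through lower covers inside it, which makes it connected.
Nestedness or disjointness of the intersections follows from that of the factors, because an
ornament hung at `w` that contains `v` forces `w ≤ v`.
-/

section Forest

variable {V : Type*} [PartialOrder V] [Finite V]

theorem le_total_of_lt_of_lt_of_forest (hforest : ∀ x a b : V, a ⋖ x → b ⋖ x → a = b)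
    {x a b : V} (ha : a < x) (hb : b < x) : a ≤ b ∨ b ≤ a := by
  induction x using WellFoundedLT.induction generalizing a b with
  | ind x ih =>
    obtain ⟨c, hac, hcx⟩ := exists_le_covBy_of_lt ha
    obtain ⟨c', hbc, hc'x⟩ := exists_le_covBy_of_lt hb
    obtain rfl : c = c' := hforest x c c' hcx hc'x
    rcases hac.eq_or_lt with rfl | hac
    · exact Or.inr hbc
    rcases hbc.eq_or_lt with rfl | hbc
    · exact Or.inl hac.le
    exact ih c hcx.lt hac hbc

theorem Icc_subset_of_walk_induce (hforest : ∀ x a b : V, a ⋖ x → b ⋖ x → a = b)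
    {S : Set V} {x y : S} (p : ((hasseGraph V).induce S).Walk x y) : Set.Icc (y : V) x ⊆ S := by
  induction p with
  | nil => rintro w ⟨h₁, h₂⟩; exact le_antisymm h₂ h₁ ▸ Subtype.prop _
  | @cons x z _ hxz p ih =>
    rintro w ⟨hyw, hwx⟩
    rcases hwx.eq_or_lt with rfl | hwx
    · exact x.2
    rcases (hxz : (x : V) ⋖ z ∨ (z : V) ⋖ x) with hxz | hzx
    · exact ih ⟨hyw, hwx.le.trans hxz.le⟩
    rcases le_total_of_lt_of_lt_of_forest hforest hwx hzx.lt with hwz | hzw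
    · exact ih ⟨hyw, hwz⟩
    · rcases hzx.eq_or_eq hzw hwx.le with rfl | rfl
      exacts [z.2, absurd hwx (lt_irrefl _)]

theorem IsOrnamentHungAt.Icc_subset (hforest : ∀ x a b : V, a ⋖ x → b ⋖ x → a = b)
    {S : Set V} {v x : V} (hS : IsOrnamentHungAt v S) (hx : x ∈ S) : Set.Icc v x ⊆ S :=
  Icc_subset_of_walk_induce hforest (hS.2.2.preconnected ⟨x, hx⟩ ⟨v, hS.1⟩).some

theorem IsOrnamentHungAt.inter (hforest : ∀ x a b : V, a ⋖ x → b ⋖ x → a = b)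
    {S T : Set V} {v : V} (hS : IsOrnamentHungAt v S) (hT : IsOrnamentHungAt v T) :
    IsOrnamentHungAt v (S ∩ T) := by
  have hv : v ∈ S ∩ T := ⟨hS.1, hT.1⟩
  refine ⟨hv, fun x hx => hS.2.1 x hx.1, ?_⟩
  have reach : ∀ x (hx : x ∈ S ∩ T),
      ((hasseGraph V).induce (S ∩ T)).Reachable ⟨v, hv⟩ ⟨x, hx⟩ := by
    intro x
    induction x using WellFoundedLT.induction with
    | ind x ih =>
      intro hx
      rcases (hS.2.1 x hx.1).eq_or_lt with rfl | hvx
      · rfl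
      obtain ⟨c, hvc, hcx⟩ := exists_le_covBy_of_lt hvx
      have hc : c ∈ S ∩ T :=
        ⟨hS.Icc_subset hforest hx.1 ⟨hvc, hcx.le⟩,
          hT.Icc_subset hforest hx.2 ⟨hvc, hcx.le⟩⟩
      have hadj : ((hasseGraph V).induce (S ∩ T)).Adj ⟨c, hc⟩ ⟨x, hx⟩ := Or.inl hcx
      exact (ih c hcx.lt hc).trans hadj.reachable
  exact (SimpleGraph.connected_iff_exists_forall_reachable _).2
    ⟨⟨v, hv⟩, fun x => reach x.1 x.2⟩

end Forest

theorem IsOrnamentation.le_of_subset {V : Type*} [PartialOrder V] {ρ : V → Set V}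
    (hρ : IsOrnamentation ρ) {v w : V} (h : ρ v ⊆ ρ w) : w ≤ v :=
  (hρ.1 w).2.1 v (h (hρ.1 v).1)

/-- Let `V` be a finite forest poset (each element covers at most one element). The
pointwise intersection of two ornamentations of `V` is an ornamentation. -/
theorem stmt12 {V : Type*} [Fintype V] [PartialOrder V]
    (hforest : ∀ x a b : V, a ⋖ x → b ⋖ x → a = b)
    (ρ σ : V → Set V) (hρ : IsOrnamentation ρ) (hσ : IsOrnamentation σ) :
    IsOrnamentation (fun v => ρ v ∩ σ v) := by
  refine ⟨fun v => (hρ.1 v).inter hforest (hσ.1 v), fun v w => ?_⟩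
  have disj_left {A B C D : Set V} (h : Disjoint A B) : Disjoint (A ∩ C) (B ∩ D) :=
    h.mono Set.inter_subset_left Set.inter_subset_left
  have disj_right {A B C D : Set V} (h : Disjoint C D) : Disjoint (A ∩ C) (B ∩ D) :=
    h.mono Set.inter_subset_right Set.inter_subset_right
  rcases hρ.2 v w with hr | hr | hr <;> rcases hσ.2 v w with hs | hs | hs
  · exact Or.inl (Set.inter_subset_inter hr hs)
  · obtain rfl := le_antisymm (hσ.le_of_subset hs) (hρ.le_of_subset hr)
    exact Or.inl subset_rfl
  · exact Or.inr (Or.inr (disj_right hs))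
  · obtain rfl := le_antisymm (hρ.le_of_subset hr) (hσ.le_of_subset hs)
    exact Or.inl subset_rfl
  · exact Or.inr (Or.inl (Set.inter_subset_inter hr hs))
  · exact Or.inr (Or.inr (disj_right hs))
  all_goals exact Or.inr (Or.inr (disj_left hr))
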